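/- arXiv:2010.00650 — 3 statements merged into one kernel-verified Lean document; each statement's English description precedes it below -/
import Mathlib

section
/- Let V be a finite-dimensional vector space over a field with basis B = {v_1, ..., v_n}, and let S be a (possibly infinite) set of commuting endomorphisms of V such that: (1) the matrix of each T ∈ S with respect to B is in Jordan canonical form (after some fixed reordering of B), and (2) every Jordan block of size greater than 1 has eigenvalue 0. Let B' ⊆ B be the set of basis vectors that are genuine eigenvectors for every T ∈ S, and suppose the elements of B' are distinguished by their S-eigenvalues, i.e. for any distinct v_i, v_j ∈ B' there exists T ∈ S whose eigenvalues on v_i and v_j differ. If W ⊆ V is a subspace preserved by every T ∈ S, then W ≠ 0 if and only if W contains some element of B'. -/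
/-!
Every operator in `S` has an upper triangular matrix, hence a split characteristic polynomial,
so each of them has an eigenspace meeting any nonzero invariant subspace. Such an intersection is
again `S`-invariant because `S` commutes, so a minimal nonzero `S`-invariant subspace of `W`
consists of common eigenvectors.

In a Jordan basis whose nontrivial blocks are nilpotent, every basis vector in the support of an
eigenvector `v` (with `T v = γ • v`) is itself an eigenvector for `γ`: high powers of `T` are
diagonal, which forces the diagonal entry to be `γ`, and when `γ = 0` a basis vector inside a
nilpotent chain would give `T v` a nonzero coordinate. Hence a common eigenvector in `W` is
supported on `B'`. Finally, if `i ≠ j` lie in its support and `T` separates them, `T v - μⱼ • v`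
stays in `W`, loses the coordinate `j` and keeps `i`; iterating leaves a multiple of a single
basis vector.
-/

open Polynomial Module

theorem eq_of_pow_eq_of_pow_succ_eq {M₀ : Type*} [MonoidWithZero M₀] [IsCancelMulZero M₀]
    {a b : M₀} {m : ℕ}
    (h : a ^ m = b ^ m) (h' : a ^ (m + 1) = b ^ (m + 1)) : a = b := by
  rcases eq_or_ne b 0 with rfl | hb
  · simpa using h'
  · rw [pow_succ, pow_succ, h] at h'
    exact mul_left_cancel₀ (pow_ne_zero m hb) h'

section

variable {K V : Type*} [Field K] [AddCommGroup V] [Module K V]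

namespace Module.End

theorem aeval_restrict_apply {f : End K V} {W : Submodule K V} (hW : ∀ x ∈ W, f x ∈ W)
    (p : K[X]) (x : W) : (aeval (f.restrict hW) p x : V) = aeval f p x := by
  induction p using Polynomial.induction_on' with
  | add p q hp hq => simp [hp, hq]
  | monomial k a => simp [aeval_monomial, pow_restrict k, LinearMap.restrict_apply]

theorem exists_inf_eigenspace_ne_bot_of_charpoly_splits [FiniteDimensional K V] {f : End K V}
    (hf : f.charpoly.Splits) {W : Submodule K V} (hW : ∀ x ∈ W, f x ∈ W) (hW0 : W ≠ ⊥) :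
    ∃ μ, W ⊓ f.eigenspace μ ≠ ⊥ := by
  have : Nontrivial W := Submodule.nontrivial_iff_ne_bot.mpr hW0
  set g := f.restrict hW
  have hg : aeval g f.charpoly = 0 := by
    ext x; simp [g, aeval_restrict_apply, LinearMap.aeval_self_charpoly]
  obtain ⟨μ, hμ⟩ := (hf.of_dvd f.charpoly_monic.ne_zero (minpoly.dvd K g hg)).exists_eval_eq_zero
    (minpoly.degree_pos (Algebra.IsIntegral.isIntegral g)).ne'
  refine ⟨μ, fun h => ?_⟩
  have hμ' : HasEigenvalue g μ := hasEigenvalue_of_isRoot hμ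
  obtain ⟨x, hx⟩ := hμ'.exists_hasEigenvector
  have : (x : V) ∈ W ⊓ f.eigenspace μ :=
    ⟨x.2, eigenspace_restrict_le_eigenspace f hW μ ⟨x, hx.1, rfl⟩⟩
  rw [h, Submodule.mem_bot] at this
  exact hx.2 (Subtype.ext this)

theorem exists_common_eigenvector_of_commute [FiniteDimensional K V] {S : Set (End K V)}
    (hcomm : ∀ f ∈ S, ∀ g ∈ S, Commute f g) (hS : ∀ f ∈ S, f.charpoly.Splits)
    {W : Submodule K V} (hW : ∀ f ∈ S, ∀ x ∈ W, f x ∈ W) (hW0 : W ≠ ⊥) :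
    ∃ x ∈ W, x ≠ 0 ∧ ∀ f ∈ S, ∃ μ : K, f x = μ • x := by
  induction W using WellFoundedLT.induction with
  | ind W ih =>
  by_cases hscalar : ∀ f ∈ S, ∃ μ : K, ∀ x ∈ W, f x = μ • x
  · obtain ⟨x, hxW, hx0⟩ := Submodule.exists_mem_ne_zero_of_ne_bot hW0
    exact ⟨x, hxW, hx0, fun f hf => (hscalar f hf).imp fun μ hμ => hμ x hxW⟩
  push Not at hscalar
  obtain ⟨f, hfS, hf⟩ := hscalar
  obtain ⟨μ, hμ⟩ :=
    exists_inf_eigenspace_ne_bot_of_charpoly_splits (hS f hfS) (hW f hfS) hW0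
  have hlt : W ⊓ f.eigenspace μ < W := by
    obtain ⟨x, hxW, hx⟩ := hf μ
    exact inf_le_left.lt_of_ne fun h => hx <| mem_eigenspace_iff.mp <| inf_eq_left.mp h hxW
  have hinv : ∀ g ∈ S, ∀ x ∈ W ⊓ f.eigenspace μ, g x ∈ W ⊓ f.eigenspace μ := by
    rintro g hg x ⟨hxW, hx⟩
    refine ⟨hW g hg x hxW, mem_eigenspace_iff.mpr ?_⟩
    rw [← mul_apply, hcomm f hfS g hg, mul_apply,
      mem_eigenspace_iff.mp hx, map_smul]
  obtain ⟨x, hx, hx0, hxS⟩ := ih _ hlt hinv hμ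
  exact ⟨x, hx.1, hx0, hxS⟩

end Module.End

theorem Module.Basis.repr_apply_of_apply_eq_smul {ι : Type*} (c : Basis ι K V) {A : End K V}
    {a : ι → K} {v : V} (hA : ∀ k ∈ (c.repr v).support, A (c k) = a k • c k) (j : ι) :
    c.repr (A v) j = a j * c.repr v j := by
  refine LinearMap.eqOn_span (f := c.coord j ∘ₗ A) (g := a j • c.coord j) ?_
    (c.mem_span_repr_support v)
  rintro _ ⟨k, hk, rfl⟩
  rcases eq_or_ne k j with rfl | hkj
  · simp [hA k hk]
  · simp [hA k hk, hkj]

open LinearMap in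
/-- The matrix of `T` in `c` is in Jordan form and every Jordan block of size `> 1` has
eigenvalue `0`. -/
def IsNilJordanBasis {n : ℕ} (c : Basis (Fin n) K V) (T : End K V) : Prop :=
  (∀ i j : Fin n, j ≠ i → (j : ℕ) ≠ (i : ℕ) + 1 → toMatrix c c T i j = 0) ∧
  (∀ i j : Fin n, (j : ℕ) = (i : ℕ) + 1 → toMatrix c c T i j ≠ 0 →
    toMatrix c c T i j = 1 ∧ toMatrix c c T i i = 0 ∧ toMatrix c c T j j = 0)

namespace IsNilJordanBasis

open LinearMap

variable {n : ℕ} {c : Basis (Fin n) K V} {T : End K V}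

theorem isUpperTriangular (hT : IsNilJordanBasis c T) : (toMatrix c c T).IsUpperTriangular :=
  fun i j (hji : j < i) => hT.1 i j hji.ne (by simp only [Fin.lt_def] at hji; omega)

theorem charpoly_splits [FiniteDimensional K V] (hT : IsNilJordanBasis c T) :
    T.charpoly.Splits := by
  rw [← charpoly_toMatrix T c, Matrix.charpoly_of_isUpperTriangular _ hT.isUpperTriangular]
  exact Splits.prod fun _ _ => Splits.X_sub_C _

theorem apply_basis (hT : IsNilJordanBasis c T) (j : Fin n) :
    T (c j) = toMatrix c c T j j • c j ∨
      toMatrix c c T j j = 0 ∧ ∃ i : Fin n, (j : ℕ) = i + 1 ∧ toMatrix c c T i i = 0 ∧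
        T (c j) = c i := by
  have hsum : T (c j) = ∑ i, toMatrix c c T i j • c i := by
    simpa using Matrix.toLin_self c c (toMatrix c c T) j
  by_cases hchain : ∃ i : Fin n, (j : ℕ) = i + 1 ∧ toMatrix c c T i j ≠ 0
  · obtain ⟨i, hij, hne⟩ := hchain
    obtain ⟨hone, hii, hjj⟩ := hT.2 i j hij hne
    refine Or.inr ⟨hjj, i, hij, hii, ?_⟩
    rw [hsum, Finset.sum_eq_single i, hone, one_smul]
    · intro k _ hki
      rcases eq_or_ne k j with rfl | hkj
      · rw [hjj, zero_smul]
      · rw [hT.1 k j hkj.symm (fun h => hki (Fin.ext (by omega))), zero_smul]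
    · simp
  · push Not at hchain
    refine Or.inl ?_
    rw [hsum, Finset.sum_eq_single j]
    · intro k _ hkj
      by_cases hjk : (j : ℕ) = k + 1
      · rw [hchain k hjk, zero_smul]
      · rw [hT.1 k j hkj.symm hjk, zero_smul]
    · simp

theorem pow_apply_basis_eq_zero (hT : IsNilJordanBasis c T) {m : ℕ} {j : Fin n}
    (hj : toMatrix c c T j j = 0) (hjm : (j : ℕ) < m) : (T ^ m) (c j) = 0 := by
  induction m generalizing j with
  | zero => omega
  | succ m ih =>
    rw [pow_succ, End.mul_apply]
    rcases hT.apply_basis j with h | ⟨-, i, hij, hi, h⟩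
    · rw [h, hj, zero_smul, map_zero]
    · rw [h]
      exact ih hi (by omega)

theorem pow_apply_basis (hT : IsNilJordanBasis c T) {m : ℕ} (hm : n ≤ m) (j : Fin n) :
    (T ^ m) (c j) = toMatrix c c T j j ^ m • c j := by
  by_cases hj : toMatrix c c T j j = 0
  · have hjm : (j : ℕ) < m := j.isLt.trans_le hm
    rw [hT.pow_apply_basis_eq_zero hj hjm, hj, zero_pow (by omega), zero_smul]
  · have hv : T.HasEigenvector (toMatrix c c T j j) (c j) := by
      refine ⟨End.mem_eigenspace_iff.mpr ?_, c.ne_zero j⟩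
      rcases hT.apply_basis j with h | ⟨h, -⟩
      · exact h
      · exact absurd h hj
    exact hv.pow_apply m

theorem diag_eq_of_repr_ne_zero (hT : IsNilJordanBasis c T) {v : V} {γ : K}
    (hv : T v = γ • v) {j : Fin n} (hj : c.repr v j ≠ 0) : toMatrix c c T j j = γ := by
  have hv' : T.HasEigenvector γ v :=
    ⟨End.mem_eigenspace_iff.mpr hv, fun h => hj (by simp [h])⟩
  have hpow : ∀ m, n ≤ m → toMatrix c c T j j ^ m = γ ^ m := fun m hm => by
    have := congrArg (fun x => c.repr x j) (hv'.pow_apply m)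
    simp only [c.repr_apply_of_apply_eq_smul (v := v) fun k _ => hT.pow_apply_basis hm k,
      map_smul, Finsupp.smul_apply, smul_eq_mul] at this
    exact mul_right_cancel₀ hj this
  exact eq_of_pow_eq_of_pow_succ_eq (hpow n le_rfl) (hpow (n + 1) (by omega))

theorem repr_apply_of_apply_basis_eq (hT : IsNilJordanBasis c T) {i j : Fin n}
    (hij : (j : ℕ) = i + 1) (hi : toMatrix c c T i i = 0) (hTj : T (c j) = c i) (v : V) :
    c.repr (T v) i = c.repr v j := by
  rw [← toMatrix_mulVec_repr c c, Matrix.mulVec, dotProduct, Finset.sum_eq_single j]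
  · rw [toMatrix_apply, hTj, c.repr_self, Finsupp.single_eq_same, one_mul]
  · intro k _ hkj
    rcases eq_or_ne k i with rfl | hki
    · rw [hi, zero_mul]
    · rw [hT.1 i k hki (fun h => hkj (Fin.ext (by omega))), zero_mul]
  · simp

theorem apply_basis_eq_smul_of_repr_ne_zero (hT : IsNilJordanBasis c T) {v : V} {γ : K}
    (hv : T v = γ • v) {j : Fin n} (hj : c.repr v j ≠ 0) : T (c j) = γ • c j := by
  rw [← hT.diag_eq_of_repr_ne_zero hv hj]
  rcases hT.apply_basis j with h | ⟨hjj, i, hij, hii, h⟩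
  · exact h
  · -- `T v = 0` here, but its `i`-th coordinate is the `j`-th coordinate of `v`
    have hγ : γ = 0 := (hT.diag_eq_of_repr_ne_zero hv hj).symm.trans hjj
    have := hT.repr_apply_of_apply_basis_eq hij hii h v
    rw [hv, hγ, zero_smul, map_zero, Finsupp.zero_apply] at this
    exact absurd this.symm hj

end IsNilJordanBasis

theorem Module.Basis.exists_mem_of_separating {ι : Type*} (b : Basis ι K V)
    {S : Set (End K V)} {B : Set ι} (hB : ∀ i ∈ B, ∀ T ∈ S, ∃ μ : K, T (b i) = μ • b i)
    (hsep : ∀ i ∈ B, ∀ j ∈ B, i ≠ j →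
      ∃ T ∈ S, ∀ μi μj : K, T (b i) = μi • b i → T (b j) = μj • b j → μi ≠ μj)
    {W : Submodule K V} (hW : ∀ T ∈ S, ∀ w ∈ W, T w ∈ W) {v : V} (hvW : v ∈ W) (hv : v ≠ 0)
    (hvB : ↑(b.repr v).support ⊆ B) : ∃ i ∈ B, b i ∈ W := by
  classical
  induction hs : (b.repr v).support using Finset.strongInduction generalizing v with
  | H s ih =>
  have hne : s.Nonempty := hs ▸ Finsupp.support_nonempty_iff.mpr (by simpa using hv)
  rcases hne.exists_eq_singleton_or_nontrivial with ⟨i, rfl⟩ | ⟨i, hi, j, hj, hij⟩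
  · obtain ⟨hri, hrepr⟩ := Finsupp.support_eq_singleton.mp hs
    have hvi : v = b.repr v i • b i := by
      simpa using congrArg b.repr.symm hrepr
    refine ⟨i, hvB (by simp [hs]), ?_⟩
    rw [← inv_smul_smul₀ hri (b i), ← hvi]
    exact W.smul_mem _ hvW
  · subst hs
    obtain ⟨T, hTS, hTij⟩ := hsep i (hvB hi) j (hvB hj) hij
    choose! μ hμ using fun k (hk : k ∈ B) => hB k hk T hTS
    set v' := T v - μ j • v
    have hrepr : ∀ k, b.repr v' k = (μ k - μ j) * b.repr v k := fun k => by
      simp [v', b.repr_apply_of_apply_eq_smul (fun k hk => hμ k (hvB hk)), sub_mul]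
    have hsub : (b.repr v').support ⊆ (b.repr v).support.erase j := fun k hk => by
      simp only [Finsupp.mem_support_iff, hrepr, Finset.mem_erase, ne_eq, mul_eq_zero,
        not_or, sub_eq_zero] at hk ⊢
      exact ⟨fun h => hk.1 (h ▸ rfl), hk.2⟩
    have hiv' : i ∈ (b.repr v').support := by
      rw [Finsupp.mem_support_iff, hrepr]
      exact mul_ne_zero (sub_ne_zero.mpr (hTij _ _ (hμ i (hvB hi)) (hμ j (hvB hj))))
        (Finsupp.mem_support_iff.mp hi)
    refine ih _ (hsub.trans_ssubset (Finset.erase_ssubset hj)) ?_ ?_ ?_ rfl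
    · exact W.sub_mem (hW T hTS v hvW) (W.smul_mem _ hvW)
    · intro h
      simp [h] at hiv'
    · exact fun k hk => hvB (Finset.mem_of_mem_erase (hsub hk))

end

/-- Jordan-form linear algebra lemma.  `V` is finite dimensional over a field `K`
with basis `b = (v_1, ..., v_n)`; `S` is a set of commuting endomorphisms such that
(after a reordering of the basis) the matrix of each `T ∈ S` is in Jordan canonical
form, with every Jordan block of size `> 1` having eigenvalue `0`.  `B'` is the set
of basis indices that are genuine eigenvectors for every `T ∈ S`, and the elements
of `B'` are distinguished by their `S`-eigenvalues.  If `W` is a subspace preserved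
by every `T ∈ S`, then `W ≠ 0` iff `W` contains some `v_i` with `i ∈ B'`. -/
theorem stmt0 (K V : Type*) [Field K] [AddCommGroup V] [Module K V]
    (n : ℕ) (b : Module.Basis (Fin n) K V)
    (S : Set (Module.End K V))
    (hcomm : ∀ T ∈ S, ∀ T' ∈ S, T * T' = T' * T)
    (hJordan : ∀ T ∈ S, ∃ e : Equiv.Perm (Fin n),
      (∀ i j : Fin n, j ≠ i → (j : ℕ) ≠ (i : ℕ) + 1 →
        LinearMap.toMatrix (b.reindex e) (b.reindex e) T i j = 0) ∧
      (∀ i j : Fin n, (j : ℕ) = (i : ℕ) + 1 →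
        LinearMap.toMatrix (b.reindex e) (b.reindex e) T i j ≠ 0 →
        LinearMap.toMatrix (b.reindex e) (b.reindex e) T i j = 1 ∧
        LinearMap.toMatrix (b.reindex e) (b.reindex e) T i i = 0 ∧
        LinearMap.toMatrix (b.reindex e) (b.reindex e) T j j = 0))
    (B' : Set (Fin n))
    (hB' : ∀ i, i ∈ B' ↔ ∀ T ∈ S, ∃ c : K, T (b i) = c • b i)
    (hdist : ∀ i ∈ B', ∀ j ∈ B', i ≠ j →
      ∃ T ∈ S, ∀ ci cj : K, T (b i) = ci • b i → T (b j) = cj • b j → ci ≠ cj)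
    (W : Submodule K V)
    (hW : ∀ T ∈ S, ∀ w ∈ W, T w ∈ W) :
    W ≠ ⊥ ↔ ∃ i ∈ B', b i ∈ W := by
  refine ⟨fun hW0 => ?_, ?_⟩
  · have : FiniteDimensional K V := Module.Finite.of_basis b
    have hJ : ∀ T ∈ S, ∃ e : Equiv.Perm (Fin n), IsNilJordanBasis (b.reindex e) T := hJordan
    obtain ⟨w, hwW, hw0, hwS⟩ := Module.End.exists_common_eigenvector_of_commute hcomm
      (fun T hT => (hJ T hT).elim fun _ he => IsNilJordanBasis.charpoly_splits he) hW hW0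
    refine b.exists_mem_of_separating (fun i hi => (hB' i).mp hi) hdist hW hwW hw0 fun i hi =>
      (hB' i).mpr fun T hT => ?_
    obtain ⟨γ, hγ⟩ := hwS T hT
    obtain ⟨e, he⟩ := hJ T hT
    have hrepr : (b.reindex e).repr w (e i) ≠ 0 := by simpa using hi
    exact ⟨γ, by simpa using he.apply_basis_eq_smul_of_repr_ne_zero hγ hrepr⟩
  · rintro ⟨i, -, hi⟩ rfl
    exact b.ne_zero i ((Submodule.mem_bot K).mp hi)
end

section
/- Let O be a Dedekind domain with fraction field F, let b be a nonzero fractional ideal of O, and let m be a nonzero integral ideal. The set (b/bm)^* of elements of b/bm that generate b/bm as an O/m-module is a principal homogeneous space for the group (O/m)^* acting by multiplication; in particular, if it is nonempty then its cardinality equals that of (O/m)^*. -/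
/-!
An invertible fractional ideal can be cancelled: `r • b ≤ m • b` forces `r ∈ m`, so the
annihilator of `b/mb` is exactly `m`. If `x` generates a module with annihilator `m`, then
`a ↦ a • x` identifies `O/m` with the module, and `a • x` is again a generator iff `a` is a
unit mod `m`; transitivity, freeness and the count all follow.
-/

open scoped nonZeroDivisors

namespace Submodule

theorem ideal_smul_eq_map_mul {R A : Type*} [CommSemiring R] [Semiring A] [Algebra R A]
    (I : Ideal R) (N : Submodule R A) :
    I • N = map (Algebra.linearMap R A) I * N := by
  apply le_antisymm
  · refine smul_le.2 fun r hr x hx => ?_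
    rw [Algebra.smul_def]
    exact mul_mem_mul ⟨r, hr, rfl⟩ hx
  · refine mul_le.2 ?_
    rintro y ⟨s, hs, rfl⟩ x hx
    rw [Algebra.linearMap_apply, ← Algebra.smul_def]
    exact smul_mem_smul hs hx

end Submodule

theorem Module.annihilator_eq_colon_of_ker_eq_smul_top {R M Q : Type*} [CommSemiring R]
    [AddCommMonoid M] [Module R M] [AddCommMonoid Q] [Module R Q]
    {N : Submodule R M} {I : Ideal R} {π : N →ₗ[R] Q} (hπ : Function.Surjective π)
    (hker : LinearMap.ker π = I • ⊤) :
    Module.annihilator R Q = (I • N).colon N := by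
  ext r
  simp only [Module.mem_annihilator, hπ.forall, ← map_smul, ← LinearMap.mem_ker, hker,
    Submodule.mem_smul_top_iff, Submodule.mem_colon, Subtype.forall, Submodule.coe_smul,
    SetLike.mem_coe]

namespace FractionalIdeal

variable {O F : Type*} [CommRing O] [IsDedekindDomain O] [Field F] [Algebra O F]
  [IsFractionRing O F] {b : FractionalIdeal O⁰ F}

theorem ideal_le_of_smul_le_smul (hb : b ≠ 0) {I J : Ideal O}
    (h : I • (b : Submodule O F) ≤ J • (b : Submodule O F)) : I ≤ J := by
  rw [Submodule.ideal_smul_eq_map_mul, Submodule.ideal_smul_eq_map_mul] at h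
  change ((I : FractionalIdeal O⁰ F) : Submodule O F) * b ≤
    ((J : FractionalIdeal O⁰ F) : Submodule O F) * b at h
  rw [← coe_mul, ← coe_mul, coe_le_coe] at h
  have h' := mul_le_mul_left h b⁻¹
  rwa [mul_inv_cancel_right₀ hb, mul_inv_cancel_right₀ hb, coeIdeal_le_coeIdeal] at h'

theorem ideal_smul_colon_self (hb : b ≠ 0) (I : Ideal O) :
    (I • (b : Submodule O F)).colon (b : Submodule O F) = I := by
  refine le_antisymm (fun r hr => ?_) fun r hr => Submodule.mem_colon.2 fun x hx =>
    Submodule.smul_mem_smul hr hx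
  have hle : Ideal.span {r} • (b : Submodule O F) ≤ I • (b : Submodule O F) :=
    Submodule.smul_le.2 fun s hs x hx => by
      obtain ⟨t, rfl⟩ := Ideal.mem_span_singleton'.1 hs
      rw [mul_smul]
      exact Submodule.smul_mem _ t (Submodule.mem_colon.1 hr x hx)
  exact ideal_le_of_smul_le_smul hb hle (Ideal.mem_span_singleton_self r)

end FractionalIdeal

namespace Module

variable {R M : Type*} [CommRing R] [AddCommGroup M] [Module R M] {x : M}

local notation "mkAnn" => Ideal.Quotient.mk (Module.annihilator R M)

theorem smul_eq_smul_iff_of_span_eq_top (hx : Submodule.span R {x} = ⊤) {u v : R} :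
    u • x = v • x ↔ mkAnn u = mkAnn v := by
  rw [Ideal.Quotient.eq, ← Submodule.annihilator_top, ← hx,
    Submodule.mem_annihilator_span_singleton, sub_smul, sub_eq_zero]

theorem span_singleton_smul_eq_top_iff (hx : Submodule.span R {x} = ⊤) {a : R} :
    Submodule.span R {a • x} = ⊤ ↔ IsUnit (mkAnn a) := by
  constructor
  · intro hax
    obtain ⟨c, hc⟩ := Submodule.mem_span_singleton.1 (hax ▸ Submodule.mem_top : x ∈ _)
    refine IsUnit.of_mul_eq_one (mkAnn c) ?_
    rw [← map_mul, ← map_one mkAnn, ← smul_eq_smul_iff_of_span_eq_top hx, mul_comm, mul_smul,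
      hc, one_smul]
  · rintro ⟨u, hu⟩
    obtain ⟨c, hc⟩ := Ideal.Quotient.mk_surjective (↑u⁻¹ : R ⧸ Module.annihilator R M)
    have hca : (c * a) • x = (1 : R) • x := by
      rw [smul_eq_smul_iff_of_span_eq_top hx, map_mul, hc, ← hu, Units.inv_mul, map_one]
    have hmem := Submodule.smul_mem (Submodule.span R {a • x}) c
      (Submodule.mem_span_singleton_self (a • x))
    rw [smul_smul, hca, one_smul] at hmem
    rw [eq_top_iff, ← hx, Submodule.span_singleton_le_iff_mem]
    exact hmem

theorem exists_isUnit_smul_eq_of_span_eq_top (hx : Submodule.span R {x} = ⊤) {y : M}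
    (hy : Submodule.span R {y} = ⊤) : ∃ u : R, IsUnit (mkAnn u) ∧ u • x = y := by
  obtain ⟨a, rfl⟩ := Submodule.mem_span_singleton.1 (hx ▸ Submodule.mem_top : y ∈ _)
  exact ⟨a, (span_singleton_smul_eq_top_iff hx).1 hy, rfl⟩

noncomputable def unitsEquivGenerators (hx : Submodule.span R {x} = ⊤) :
    (R ⧸ Module.annihilator R M)ˣ ≃ {y : M // Submodule.span R {y} = ⊤} :=
  Equiv.ofBijective
    (fun u => ⟨Quotient.out (u : R ⧸ Module.annihilator R M) • x,
      (span_singleton_smul_eq_top_iff hx).2 (by rw [Ideal.Quotient.mk_out]; exact u.isUnit)⟩)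
    ⟨fun u v huv => Units.ext <| by
      simpa only [Ideal.Quotient.mk_out] using
        (smul_eq_smul_iff_of_span_eq_top hx).1 (congrArg Subtype.val huv),
    fun ⟨y, hy⟩ => by
      obtain ⟨a, ha, rfl⟩ := exists_isUnit_smul_eq_of_span_eq_top hx hy
      refine ⟨ha.unit, Subtype.ext ((smul_eq_smul_iff_of_span_eq_top hx).2 ?_)⟩
      rw [Ideal.Quotient.mk_out, IsUnit.unit_spec]⟩

end Module

theorem stmt2_general (O : Type*) [CommRing O] [IsDedekindDomain O]
    (F : Type*) [Field F] [Algebra O F] [IsFractionRing O F]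
    (b : FractionalIdeal O⁰ F) (hb : b ≠ 0)
    (m : Ideal O) :
    -- Q := (b/bm), the quotient of the module b by m•b
    ∀ (Q : Type _) (_ : AddCommGroup Q) (_ : Module O Q)
      (π : (b : Submodule O F) →ₗ[O] Q),
      Function.Surjective π →
      (LinearMap.ker π = m • (⊤ : Submodule O (b : Submodule O F))) →
      -- transitivity of the `(O/m)^*`-action on generators
      ((∀ x y : Q, Submodule.span O {x} = ⊤ → Submodule.span O {y} = ⊤ →
          ∃ u : O, IsUnit (Ideal.Quotient.mk m u) ∧ u • x = y) ∧
      -- freeness of the action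
        (∀ x : Q, Submodule.span O {x} = ⊤ → ∀ u v : O, u • x = v • x →
          Ideal.Quotient.mk m u = Ideal.Quotient.mk m v) ∧
      -- cardinality consequence
        ((∃ x : Q, Submodule.span O {x} = ⊤) →
          Nat.card {x : Q // Submodule.span O {x} = ⊤} = Nat.card ((O ⧸ m)ˣ))) := by
  intro Q _ _ π hπ hker
  have hann : Module.annihilator O Q = m := by
    rw [Module.annihilator_eq_colon_of_ker_eq_smul_top hπ hker,
      FractionalIdeal.ideal_smul_colon_self hb]
  subst hann
  refine ⟨fun x y hx hy => Module.exists_isUnit_smul_eq_of_span_eq_top hx hy,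
    fun x hx u v => (Module.smul_eq_smul_iff_of_span_eq_top hx).1, ?_⟩
  rintro ⟨x, hx⟩
  exact (Nat.card_congr (Module.unitsEquivGenerators hx)).symm

/-- For a Dedekind domain `O` with fraction field `F`, a nonzero fractional ideal `b`
and a nonzero integral ideal `m`, the set `(b/bm)^*` of generators of the `O/m`-module
`b/bm` is a principal homogeneous space under `(O/m)^*` acting by multiplication:
the action is transitive and free; in particular, if it is nonempty its cardinality
equals that of `(O/m)^*`. -/
theorem stmt2 (O : Type*) [CommRing O] [IsDomain O] [IsDedekindDomain O]
    (F : Type*) [Field F] [Algebra O F] [IsFractionRing O F]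
    (b : FractionalIdeal O⁰ F) (hb : b ≠ 0)
    (m : Ideal O) (hm : m ≠ ⊥) :
    -- Q := (b/bm), the quotient of the module b by m•b
    ∀ (Q : Type _) (_ : AddCommGroup Q) (_ : Module O Q)
      (π : (b : Submodule O F) →ₗ[O] Q),
      Function.Surjective π →
      (LinearMap.ker π = m • (⊤ : Submodule O (b : Submodule O F))) →
      -- transitivity of the `(O/m)^*`-action on generators
      ((∀ x y : Q, Submodule.span O {x} = ⊤ → Submodule.span O {y} = ⊤ →
          ∃ u : O, IsUnit (Ideal.Quotient.mk m u) ∧ u • x = y) ∧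
      -- freeness of the action
        (∀ x : Q, Submodule.span O {x} = ⊤ → ∀ u v : O, u • x = v • x →
          Ideal.Quotient.mk m u = Ideal.Quotient.mk m v) ∧
      -- cardinality consequence
        ((∃ x : Q, Submodule.span O {x} = ⊤) →
          Nat.card {x : Q // Submodule.span O {x} = ⊤} = Nat.card ((O ⧸ m)ˣ))) :=
  stmt2_general O F b hb m
end

section
/- Let F be a number field with ring of integers O_F, and let a, c ∈ F not both zero. Let t, d be nonzero fractional ideals of F, set b = aO_F + c(td)^{-1}, and define the integral ideals a_A = a·b^{-1} and c_A = c·(td·b)^{-1} (with the convention that the ideal generated by 0 is the zero ideal, so that if a = 0 then b = c(td)^{-1} and c_A = O_F). Then a_A and c_A are coprime integral ideals, i.e. a_A + c_A = O_F. -/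
open NumberField FractionalIdeal
open scoped nonZeroDivisors

namespace FractionalIdeal

variable {R K : Type*} [CommRing R] [IsDedekindDomain R] [Field K] [Algebra R K]
  [IsFractionRing R K]

theorem mul_inv_le_one_of_le {I J : FractionalIdeal R⁰ K} (h : I ≤ J) : I * J⁻¹ ≤ 1 := by
  rcases eq_or_ne J 0 with rfl | hJ
  · simp
  · exact (mul_le_mul_left h _).trans (mul_inv_cancel₀ hJ).le

theorem add_mul_inv_add_eq_one {I J : FractionalIdeal R⁰ K} (h : I + J ≠ 0) :
    I * (I + J)⁻¹ + J * (I + J)⁻¹ = 1 := by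
  rw [← add_mul, mul_inv_cancel₀ h]

theorem spanSingleton_add_spanSingleton_mul_ne_zero {a c : K} (h : ¬(a = 0 ∧ c = 0))
    {I : FractionalIdeal R⁰ K} (hI : I ≠ 0) :
    spanSingleton R⁰ a + spanSingleton R⁰ c * I ≠ 0 := by
  simpa [add_eq_zero, spanSingleton_eq_zero_iff, hI] using h

end FractionalIdeal

/-- For a number field `F`, elements `a, c ∈ F` not both zero, nonzero fractional ideals
`t, d`, with `b = aO_F + c(td)⁻¹`, the ideals `a_A = a b⁻¹` and `c_A = c (t d b)⁻¹`
are coprime integral ideals: `a_A ≤ O_F`, `c_A ≤ O_F` and `a_A + c_A = O_F`. -/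
theorem stmt3 (F : Type*) [Field F] [NumberField F]
    (a c : F) (h : ¬(a = 0 ∧ c = 0))
    (t d : FractionalIdeal (𝓞 F)⁰ F) (ht : t ≠ 0) (hd : d ≠ 0)
    (b : FractionalIdeal (𝓞 F)⁰ F)
    (hb : b = spanSingleton (𝓞 F)⁰ a + spanSingleton (𝓞 F)⁰ c * (t * d)⁻¹) :
    spanSingleton (𝓞 F)⁰ a * b⁻¹ ≤ 1 ∧
    spanSingleton (𝓞 F)⁰ c * (t * d * b)⁻¹ ≤ 1 ∧
    spanSingleton (𝓞 F)⁰ a * b⁻¹ + spanSingleton (𝓞 F)⁰ c * (t * d * b)⁻¹ = 1 := by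
  rw [mul_inv, ← mul_assoc]
  subst hb
  exact ⟨mul_inv_le_one_of_le le_self_add, mul_inv_le_one_of_le le_add_self,
    add_mul_inv_add_eq_one
      (spanSingleton_add_spanSingleton_mul_ne_zero h (inv_ne_zero (mul_ne_zero ht hd)))⟩
end
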